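/- Suppose R_M ⫫ (M, R_Y) | (X, A, Y) and R_Y ⫫ (Y, R_M) | (X, A, M) (Model S4). Then for all (x, a) with appropriate positivity conditions: P(R_M = 0, R_Y = 0 | X = x, A = a) / P(R_M = 1, R_Y = 1 | X = x, A = a) = E[ odds(R_M = 0 | X, A, M, Y, R_Y = 1) · odds(R_Y = 0 | X, A, M, Y, R_M = 1) | X = x, A = a, R_M = 1, R_Y = 1 ]. -/

import Mathlib

open scoped Classical

noncomputable def Pr {Ω : Type*} [Fintype Ω] (p : Ω → ℝ) (E : Ω → Prop) : ℝ :=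
  ∑ ω, if E ω then p ω else 0

noncomputable def cPr {Ω : Type*} [Fintype Ω] (p : Ω → ℝ) (E F : Ω → Prop) : ℝ :=
  Pr p (fun ω => E ω ∧ F ω) / Pr p F

noncomputable def odds {Ω : Type*} [Fintype Ω] (p : Ω → ℝ) (E F : Ω → Prop) : ℝ :=
  cPr p E F / cPr p (fun ω => ¬ E ω) F

/-!
Fix a stratum `C = {X = x, A = a, M = m, Y = y}`. Since `R_M ⫫ R_Y | C`, the four cells
`P(R_M = i, R_Y = j, C)` satisfy the cross-product identity `P₀₀ P₁₁ = P₀₁ P₁₀`, so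
`odds(R_M = 0 | C, R_Y = 1) · odds(R_Y = 0 | C, R_M = 1) · P₁₁ = (P₀₁ / P₁₁) (P₁₀ / P₁₁) P₁₁ = P₀₀`.
Dividing by `P(X = x, A = a, R_M = 1, R_Y = 1)` and summing over `(m, y)` gives the claim.
-/

section
variable {Ω : Type*} [Fintype Ω] {p : Ω → ℝ}

theorem Pr_congr {E F : Ω → Prop} (h : ∀ ω, E ω ↔ F ω) : Pr p E = Pr p F := by
  simp only [Pr, h]

theorem Pr_nonneg (hp : ∀ ω, 0 ≤ p ω) (E : Ω → Prop) : 0 ≤ Pr p E :=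
  Finset.sum_nonneg fun ω _ => by split_ifs <;> simp [hp ω]

theorem Pr_mono (hp : ∀ ω, 0 ≤ p ω) {E F : Ω → Prop} (h : ∀ ω, E ω → F ω) :
    Pr p E ≤ Pr p F :=
  Finset.sum_le_sum fun ω _ => by
    by_cases hE : E ω
    · simp [hE, h ω hE]
    · split_ifs <;> simp [hp ω]

variable (p) in
theorem Pr_and_add_Pr_not_and (E F : Ω → Prop) :
    Pr p (fun ω => E ω ∧ F ω) + Pr p (fun ω => ¬E ω ∧ F ω) = Pr p F := by
  simp only [Pr, ← Finset.sum_add_distrib]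
  refine Finset.sum_congr rfl fun ω _ => ?_
  by_cases hE : E ω <;> simp [hE]

variable (p) in
theorem Pr_eq_sum_Pr_and_eq {β : Type*} [Fintype β] (V : Ω → β) (E : Ω → Prop) :
    Pr p E = ∑ v, Pr p (fun ω => V ω = v ∧ E ω) := by
  simp only [Pr]
  rw [Finset.sum_comm]
  refine Finset.sum_congr rfl fun ω _ => ?_
  by_cases hE : E ω <;> simp [hE]

-- If `Pr p F = 0` then both sides vanish, thanks to `x / 0 = 0`.
theorem cPr_div_cPr (hp : ∀ ω, 0 ≤ p ω) (E G F : Ω → Prop) :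
    cPr p E F / cPr p G F = Pr p (fun ω => E ω ∧ F ω) / Pr p (fun ω => G ω ∧ F ω) := by
  rcases (Pr_nonneg hp F).eq_or_lt with hF | hF
  · have hEF : Pr p (fun ω => E ω ∧ F ω) = 0 :=
      le_antisymm (hF ▸ Pr_mono hp fun ω h => h.2) (Pr_nonneg hp _)
    simp [cPr, ← hF, hEF]
  · exact div_div_div_cancel_right₀ hF.ne' _ _

theorem odds_eq_div (hp : ∀ ω, 0 ≤ p ω) (E F : Ω → Prop) :
    odds p E F = Pr p (fun ω => E ω ∧ F ω) / Pr p (fun ω => ¬E ω ∧ F ω) :=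
  cPr_div_cPr hp _ _ _

theorem Pr_mul_Pr_eq_of_cPr_eq (hp : ∀ ω, 0 ≤ p ω) {C E G : Ω → Prop}
    (hpos : 0 < Pr p (fun ω => ¬E ω ∧ ¬G ω ∧ C ω))
    (h : cPr p E (fun ω => G ω ∧ C ω) = cPr p E (fun ω => ¬G ω ∧ C ω)) :
    Pr p (fun ω => E ω ∧ G ω ∧ C ω) * Pr p (fun ω => ¬E ω ∧ ¬G ω ∧ C ω)
      = Pr p (fun ω => E ω ∧ ¬G ω ∧ C ω) * Pr p (fun ω => ¬E ω ∧ G ω ∧ C ω) := by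
  have hG := Pr_and_add_Pr_not_and p E (fun ω => G ω ∧ C ω)
  have hG' := Pr_and_add_Pr_not_and p E (fun ω => ¬G ω ∧ C ω)
  simp only [cPr, ← hG, ← hG'] at h
  have hEG := Pr_nonneg hp (fun ω => E ω ∧ G ω ∧ C ω)
  have hEG' := Pr_nonneg hp (fun ω => E ω ∧ ¬G ω ∧ C ω)
  have hnEG := Pr_nonneg hp (fun ω => ¬E ω ∧ G ω ∧ C ω)
  rcases (add_nonneg hEG hnEG).eq_or_lt with h0 | h0
  · -- a null event `G ∧ C` has null cells, so both sides vanish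
    obtain ⟨hEG0, hnEG0⟩ := (add_eq_zero_iff_of_nonneg hEG hnEG).mp h0.symm
    rw [hEG0, hnEG0]
    ring
  · rw [div_eq_div_iff h0.ne' (add_pos_of_nonneg_of_pos hEG' hpos).ne'] at h
    linear_combination h

theorem odds_mul_odds_mul_Pr_of_cPr_eq (hp : ∀ ω, 0 ≤ p ω) {C E G : Ω → Prop}
    (hpos : 0 < Pr p (fun ω => ¬E ω ∧ ¬G ω ∧ C ω))
    (h : cPr p E (fun ω => G ω ∧ C ω) = cPr p E (fun ω => ¬G ω ∧ C ω)) :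
    odds p E (fun ω => ¬G ω ∧ C ω) * odds p G (fun ω => ¬E ω ∧ C ω)
        * Pr p (fun ω => ¬E ω ∧ ¬G ω ∧ C ω)
      = Pr p (fun ω => E ω ∧ G ω ∧ C ω) := by
  have hcross := Pr_mul_Pr_eq_of_cPr_eq hp hpos h
  rw [odds_eq_div hp, odds_eq_div hp,
    Pr_congr (F := fun ω => ¬E ω ∧ G ω ∧ C ω) fun ω => and_left_comm,
    Pr_congr (E := fun ω => ¬G ω ∧ ¬E ω ∧ C ω) fun ω => and_left_comm]
  field_simp
  linear_combination -hcross

theorem cPr_div_cPr_eq_sum_odds_mul_odds (hp : ∀ ω, 0 ≤ p ω) {β : Type*} [Fintype β]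
    (V : Ω → β) {D E G : Ω → Prop}
    (hpos : ∀ v, 0 < Pr p (fun ω => ¬E ω ∧ ¬G ω ∧ V ω = v ∧ D ω))
    (h : ∀ v, cPr p E (fun ω => G ω ∧ V ω = v ∧ D ω)
      = cPr p E (fun ω => ¬G ω ∧ V ω = v ∧ D ω)) :
    cPr p (fun ω => E ω ∧ G ω) D / cPr p (fun ω => ¬E ω ∧ ¬G ω) D
      = ∑ v, odds p E (fun ω => ¬G ω ∧ V ω = v ∧ D ω)
          * odds p G (fun ω => ¬E ω ∧ V ω = v ∧ D ω)
          * cPr p (fun ω => V ω = v) (fun ω => ¬E ω ∧ ¬G ω ∧ D ω) := by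
  rw [cPr_div_cPr hp]
  simp only [cPr, ← mul_div_assoc, ← Finset.sum_div, and_assoc]
  congr 1
  rw [Pr_eq_sum_Pr_and_eq p V]
  refine Finset.sum_congr rfl fun v _ => ?_
  rw [Pr_congr (E := fun ω => V ω = v ∧ ¬E ω ∧ ¬G ω ∧ D ω)
      (F := fun ω => ¬E ω ∧ ¬G ω ∧ V ω = v ∧ D ω) fun ω => by tauto,
    odds_mul_odds_mul_Pr_of_cPr_eq hp (hpos v) (h v)]
  exact Pr_congr fun ω => by tauto

end

theorem S4_testable_implication_general
    {Ω 𝒳 𝒜 ℳ 𝒴 : Type*} [Fintype Ω] [Fintype ℳ] [Fintype 𝒴]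
    (p : Ω → ℝ) (hp : ∀ ω, 0 ≤ p ω)
    (X : Ω → 𝒳) (A : Ω → 𝒜) (M : Ω → ℳ) (Y : Ω → 𝒴) (RM RY : Ω → ℕ)
    (hRM : ∀ ω, RM ω = 0 ∨ RM ω = 1) (hRY : ∀ ω, RY ω = 0 ∨ RY ω = 1)
    -- R_M ⫫ (M, R_Y) ∣ (X, A, Y)
    (h1 : ∀ (rm : ℕ) (m : ℳ) (ry : ℕ) (x : 𝒳) (a : 𝒜) (y : 𝒴),
      0 < Pr p (fun ω => M ω = m ∧ RY ω = ry ∧ X ω = x ∧ A ω = a ∧ Y ω = y) →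
      cPr p (fun ω => RM ω = rm)
          (fun ω => M ω = m ∧ RY ω = ry ∧ X ω = x ∧ A ω = a ∧ Y ω = y)
        = cPr p (fun ω => RM ω = rm) (fun ω => X ω = x ∧ A ω = a ∧ Y ω = y)) :
    ∀ (x : 𝒳) (a : 𝒜),
      (∀ (m : ℳ) (y : 𝒴) (r s : Fin 2),
        0 < Pr p (fun ω => RM ω = (r : ℕ) ∧ RY ω = (s : ℕ) ∧
            X ω = x ∧ A ω = a ∧ M ω = m ∧ Y ω = y)) →
      cPr p (fun ω => RM ω = 0 ∧ RY ω = 0) (fun ω => X ω = x ∧ A ω = a)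
          / cPr p (fun ω => RM ω = 1 ∧ RY ω = 1) (fun ω => X ω = x ∧ A ω = a)
        = ∑ m : ℳ, ∑ y : 𝒴,
            (odds p (fun ω => RM ω = 0)
                (fun ω => X ω = x ∧ A ω = a ∧ M ω = m ∧ Y ω = y ∧ RY ω = 1)
              * odds p (fun ω => RY ω = 0)
                  (fun ω => X ω = x ∧ A ω = a ∧ M ω = m ∧ Y ω = y ∧ RM ω = 1))
            * cPr p (fun ω => M ω = m ∧ Y ω = y)
                (fun ω => X ω = x ∧ A ω = a ∧ RM ω = 1 ∧ RY ω = 1) := by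
  intro x a hpos
  have hRM1 : ∀ ω, RM ω = 1 ↔ ¬RM ω = 0 := fun ω => by rcases hRM ω with h | h <;> simp [h]
  have hRY1 : ∀ ω, RY ω = 1 ↔ ¬RY ω = 0 := fun ω => by rcases hRY ω with h | h <;> simp [h]
  have hdiag : ∀ v : ℳ × 𝒴, 0 < Pr p (fun ω =>
      ¬RM ω = 0 ∧ ¬RY ω = 0 ∧ (M ω, Y ω) = v ∧ X ω = x ∧ A ω = a) := by
    rintro ⟨m, y⟩
    exact (hpos m y 1 1).trans_eq (Pr_congr fun ω => by grind)
  have hindep : ∀ v : ℳ × 𝒴,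
      cPr p (fun ω => RM ω = 0) (fun ω => RY ω = 0 ∧ (M ω, Y ω) = v ∧ X ω = x ∧ A ω = a)
        = cPr p (fun ω => RM ω = 0)
            (fun ω => ¬RY ω = 0 ∧ (M ω, Y ω) = v ∧ X ω = x ∧ A ω = a) := by
    rintro ⟨m, y⟩
    have hmarg (s : Fin 2) :
        0 < Pr p (fun ω => M ω = m ∧ RY ω = s ∧ X ω = x ∧ A ω = a ∧ Y ω = y) :=
      (hpos m y 0 s).trans_le (Pr_mono hp fun ω => by grind)
    convert (h1 0 m 0 x a y (hmarg 0)).trans (h1 0 m 1 x a y (hmarg 1)).symm using 2 <;>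
      funext ω <;> grind
  rw [← Fintype.sum_prod_type']
  simp only [hRM1, hRY1]
  rw [cPr_div_cPr_eq_sum_odds_mul_odds hp (fun ω => (M ω, Y ω)) hdiag hindep]
  refine Finset.sum_congr rfl fun v _ => ?_
  congr 3 <;> funext ω <;> grind

/-- Testable implication (T3) of Model S4. -/
theorem S4_testable_implication
    {Ω 𝒳 𝒜 ℳ 𝒴 : Type*} [Fintype Ω] [Fintype ℳ] [Fintype 𝒴]
    (p : Ω → ℝ) (hp : ∀ ω, 0 ≤ p ω) (hsum : ∑ ω, p ω = 1)
    (X : Ω → 𝒳) (A : Ω → 𝒜) (M : Ω → ℳ) (Y : Ω → 𝒴) (RM RY : Ω → ℕ)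
    (hRM : ∀ ω, RM ω = 0 ∨ RM ω = 1) (hRY : ∀ ω, RY ω = 0 ∨ RY ω = 1)
    -- R_M ⫫ (M, R_Y) ∣ (X, A, Y)
    (h1 : ∀ (rm : ℕ) (m : ℳ) (ry : ℕ) (x : 𝒳) (a : 𝒜) (y : 𝒴),
      0 < Pr p (fun ω => M ω = m ∧ RY ω = ry ∧ X ω = x ∧ A ω = a ∧ Y ω = y) →
      cPr p (fun ω => RM ω = rm)
          (fun ω => M ω = m ∧ RY ω = ry ∧ X ω = x ∧ A ω = a ∧ Y ω = y)
        = cPr p (fun ω => RM ω = rm) (fun ω => X ω = x ∧ A ω = a ∧ Y ω = y))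
    -- R_Y ⫫ (Y, R_M) ∣ (X, A, M)
    (h2 : ∀ (ry : ℕ) (y : 𝒴) (rm : ℕ) (x : 𝒳) (a : 𝒜) (m : ℳ),
      0 < Pr p (fun ω => Y ω = y ∧ RM ω = rm ∧ X ω = x ∧ A ω = a ∧ M ω = m) →
      cPr p (fun ω => RY ω = ry)
          (fun ω => Y ω = y ∧ RM ω = rm ∧ X ω = x ∧ A ω = a ∧ M ω = m)
        = cPr p (fun ω => RY ω = ry) (fun ω => X ω = x ∧ A ω = a ∧ M ω = m)) :
    ∀ (x : 𝒳) (a : 𝒜),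
      (∀ (m : ℳ) (y : 𝒴) (r s : Fin 2),
        0 < Pr p (fun ω => RM ω = (r : ℕ) ∧ RY ω = (s : ℕ) ∧
            X ω = x ∧ A ω = a ∧ M ω = m ∧ Y ω = y)) →
      cPr p (fun ω => RM ω = 0 ∧ RY ω = 0) (fun ω => X ω = x ∧ A ω = a)
          / cPr p (fun ω => RM ω = 1 ∧ RY ω = 1) (fun ω => X ω = x ∧ A ω = a)
        = ∑ m : ℳ, ∑ y : 𝒴,
            (odds p (fun ω => RM ω = 0)
                (fun ω => X ω = x ∧ A ω = a ∧ M ω = m ∧ Y ω = y ∧ RY ω = 1)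
              * odds p (fun ω => RY ω = 0)
                  (fun ω => X ω = x ∧ A ω = a ∧ M ω = m ∧ Y ω = y ∧ RM ω = 1))
            * cPr p (fun ω => M ω = m ∧ Y ω = y)
                (fun ω => X ω = x ∧ A ω = a ∧ RM ω = 1 ∧ RY ω = 1) :=
  S4_testable_implication_general p hp X A M Y RM RY hRM hRY h1
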